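/- Let m ∈ ℕ, let g ∈ ℝ³, v, p ∈ ℝ³, and f : Fin m → ℝ³. Write S(a) for the 3×3 skew-symmetric matrix of a ∈ ℝ³ (so S(a)·x = a ×₃ x for all x ∈ ℝ³). Define the (15+3m)×(15+3m) block matrix T, with row and column blocks of sizes (3,3,3,3,3, 3,…,3), by: the top-left 15×15 block equal to the identity I₁₅, the top-right 15×3m block zero, and for each i = 1,…,m the feature block row i equal to S(f i) in the first block column, zero in block columns 2–5, I₃ in its own feature block column, and zero in the other feature block columns. Define the (15+3m)×4 matrix N by block rows (of height 3) with columns split (3,1): row 1 = (0₃ₓ₃, −g); row 2 = (0₃ₓ₃, 0); row 3 = (I₃, 0); rows 4–5 = (0₃ₓ₃, 0); feature row i = (I₃, S(f i)·g). Then T·N equals the (15+3m)×4 matrix with block rows: row 1 = (0₃ₓ₃, −g); row 2 = (0₃ₓ₃, 0); row 3 = (I₃, 0); rows 4–5 = (0₃ₓ₃, 0); feature row i = (I₃, 0). In particular, T·N does not depend on v, p, or the landmark estimates f i. -/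
import Mathlib


open Matrix

/-- The 3×3 skew-symmetric matrix `S(a)` of `a ∈ ℝ³`, satisfying `S(a) · x = a ×₃ x`. -/
def skew (a : Fin 3 → ℝ) : Matrix (Fin 3) (Fin 3) ℝ :=
  !![0, -a 2, a 1; a 2, 0, -a 0; -a 1, a 0, 0]

/-- Assemble a `(15+3m) × (15+3m)` matrix from 3×3 blocks indexed by the five IMU block
indices together with the `m` feature block indices. -/
def assembleBlocks {m : ℕ}
    (B : (Fin 5 ⊕ Fin m) → (Fin 5 ⊕ Fin m) → Matrix (Fin 3) (Fin 3) ℝ) :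
    Matrix ((Fin 5 ⊕ Fin m) × Fin 3) ((Fin 5 ⊕ Fin m) × Fin 3) ℝ :=
  fun x y => B x.1 y.1 x.2 y.2

/-- Assemble a `(15+3m) × 4` matrix from block rows of height 3 whose columns are
split `(3, 1)`. -/
def assembleRows {m : ℕ}
    (Brow : (Fin 5 ⊕ Fin m) → Matrix (Fin 3) (Fin 3 ⊕ Fin 1) ℝ) :
    Matrix ((Fin 5 ⊕ Fin m) × Fin 3) (Fin 3 ⊕ Fin 1) ℝ :=
  fun x c => Brow x.1 x.2 c

/-- A block row `(A, b)` with columns split `(3, 1)`. -/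
def rowPair (A : Matrix (Fin 3) (Fin 3) ℝ) (b : Fin 3 → ℝ) :
    Matrix (Fin 3) (Fin 3 ⊕ Fin 1) ℝ :=
  fun r => Sum.elim (fun j => A r j) (fun _ => b r)

/-- The block entries of the coordinate-transformation matrix `T` used to construct the
consistent T-EqF from the SD-EqF (equation (29) of the paper): the top-left 15×15 block
is the identity, the top-right block is zero, and the feature block row `i` has
`S(f i)` in the first block column and `I₃` in its own feature block column. -/
def sdToTeqfBlocks (m : ℕ) (f : Fin m → Fin 3 → ℝ) :
    (Fin 5 ⊕ Fin m) → (Fin 5 ⊕ Fin m) → Matrix (Fin 3) (Fin 3) ℝ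
  | Sum.inl a, Sum.inl b => if a = b then 1 else 0
  | Sum.inl _, Sum.inr _ => 0
  | Sum.inr i, Sum.inl b => if b = 0 then skew (f i) else 0
  | Sum.inr i, Sum.inr j => if i = j then 1 else 0

/-- The basis matrix of the SD-EqF unobservable subspace (equation (26) of the paper). -/
def sdUnobsBasis (m : ℕ) (g : Fin 3 → ℝ) (f : Fin m → Fin 3 → ℝ) :
    Matrix ((Fin 5 ⊕ Fin m) × Fin 3) (Fin 3 ⊕ Fin 1) ℝ :=
  assembleRows (Sum.elim
    ![rowPair 0 (-g),
      rowPair 0 0,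
      rowPair 1 0,
      rowPair 0 0,
      rowPair 0 0]
    (fun i => rowPair 1 (skew (f i) *ᵥ g)))

/-- The state-independent basis matrix of the T-EqF unobservable subspace. -/
def teqfUnobsBasis (m : ℕ) (g : Fin 3 → ℝ) :
    Matrix ((Fin 5 ⊕ Fin m) × Fin 3) (Fin 3 ⊕ Fin 1) ℝ :=
  assembleRows (Sum.elim
    ![rowPair 0 (-g),
      rowPair 0 0,
      rowPair 1 0,
      rowPair 0 0,
      rowPair 0 0]
    (fun _ => rowPair 1 0))

/-- **Consistency verification of Section V-C of the paper**: applying the coordinate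
transformation `T` of equation (29) to the basis matrix `N` of the SD-EqF unobservable
subspace yields a basis matrix that does not depend on the velocity `v`, position `p`,
or landmark estimates `f i` — hence the resulting T-EqF has a state-independent
unobservable subspace and, by Theorem 2, is a consistent equivariant filter. -/
theorem teqf_unobservable_basis_state_independent (m : ℕ)
    (g v p : Fin 3 → ℝ) (f : Fin m → Fin 3 → ℝ) :
    assembleBlocks (sdToTeqfBlocks m f) * sdUnobsBasis m g f = teqfUnobsBasis m g := by
  ext ⟨a, r⟩ c
  simp only [Matrix.mul_apply, assembleBlocks, assembleRows, sdUnobsBasis, teqfUnobsBasis,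
    sdToTeqfBlocks, Fintype.sum_prod_type, Fintype.sum_sum_type]
  rcases a with a | i
  · simp only [Sum.inl.injEq, reduceCtorEq, if_false]
    rw [Finset.sum_eq_single a (by intro b _ hb; simp [if_neg (Ne.symm hb)]) (by simp)]
    simp [Matrix.one_apply]
  · simp only [reduceCtorEq, if_false, Sum.inr.injEq]
    rw [Finset.sum_eq_single (0 : Fin 5) (fun b _ hb => by simp [if_neg hb]) (by simp),
      Finset.sum_eq_single i (fun j _ hj => by simp [if_neg (Ne.symm hj)]) (by simp)]
    rcases c with j | j
    · simp [rowPair, Matrix.one_apply]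
    · simp [rowPair, Matrix.mulVec, dotProduct, Fin.sum_univ_three, Matrix.one_apply]
      fin_cases r <;> simp [skew] <;> ring
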